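/- If a graph G admits a tree-decomposition into finite cliques, then G contains no induced minor isomorphic to 𝓗, the graph obtained from an infinite clique by adding two non-adjacent dominating vertices. -/

import Mathlib

open SimpleGraph

variable {V W : Type*}

/-- `G` contains no induced cycle of length at least four. -/
def IsChordal (G : SimpleGraph V) : Prop :=
  ∀ (n : ℕ), 4 ≤ n → ∀ f : ZMod n → V, Function.Injective f →
    (∀ i j : ZMod n, G.Adj (f i) (f j) ↔ j = i + 1 ∨ i = j + 1) → False

/-- The set of vertices outside `C` having a neighbour in `C`. -/
def nbhdSet (G : SimpleGraph V) (C : Set V) : Set V :=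
  {v | v ∉ C ∧ ∃ u ∈ C, G.Adj u v}

/-- `C` is a connected component of `G - S`. -/
def IsCompOutside (G : SimpleGraph V) (S C : Set V) : Prop :=
  C.Nonempty ∧ Disjoint C S ∧ (G.induce C).Connected ∧
    ∀ u ∈ C, ∀ v, G.Adj u v → v ∉ S → v ∈ C

/-- A strict comb of cliques. -/
def HasStrictCombOfCliques (G : SimpleGraph V) : Prop :=
  ∃ v : ℕ → V, Function.Injective v ∧ (∀ i j, i ≠ j → G.Adj (v i) (v j)) ∧
    ∀ i : ℕ, 0 < i → ∃ w, (∀ j, j < i → G.Adj w (v j)) ∧ (∀ j, i ≤ j → ¬ G.Adj w (v j))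

/-- Every walk from `A` to `B` meets `S`. -/
def Separates (G : SimpleGraph V) (A B S : Set V) : Prop :=
  ∀ a ∈ A, ∀ b ∈ B, ∀ p : G.Walk a b, ∃ x ∈ p.support, x ∈ S

/-- `S` is a minimal `A`–`B` separator. -/
def IsMinimalSeparator (G : SimpleGraph V) (A B S : Set V) : Prop :=
  Separates G A B S ∧ ∀ S' ⊆ S, Separates G A B S' → S' = S

/-- `S` is a minimal `a`–`b` separator (containing neither `a` nor `b`). -/
def IsMinimalVxSeparator (G : SimpleGraph V) (a b : V) (S : Set V) : Prop :=
  a ∉ S ∧ b ∉ S ∧ Separates G {a} {b} S ∧ ∀ S' ⊆ S, Separates G {a} {b} S' → S' = S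

/-- A tree-decomposition of `G` with decomposition tree `T` and bags `bag`. -/
def IsTreeDecomp {ι : Type*} (G : SimpleGraph V) (T : SimpleGraph ι) (bag : ι → Set V) : Prop :=
  T.IsTree ∧ (∀ v, ∃ t, v ∈ bag t) ∧
    (∀ u v, G.Adj u v → ∃ t, u ∈ bag t ∧ v ∈ bag t) ∧
    ∀ v, (T.induce {t | v ∈ bag t}).Connected

/-- `H` is an induced minor of `G`. -/
def IsInducedMinor (H : SimpleGraph W) (G : SimpleGraph V) : Prop :=
  ∃ B : W → Set V, (∀ w, (B w).Nonempty) ∧ (∀ w, (G.induce (B w)).Connected) ∧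
    (Pairwise fun u w => Disjoint (B u) (B w)) ∧
    ∀ u w, u ≠ w → ((∃ x ∈ B u, ∃ y ∈ B w, G.Adj x y) ↔ H.Adj u w)

/-- The graph `𝓗`: a countably infinite clique together with two non-adjacent
dominating vertices. -/
def HGraph : SimpleGraph (ℕ ⊕ Bool) where
  Adj x y := match x, y with
    | .inl i, .inl j => i ≠ j
    | .inl _, .inr _ => True
    | .inr _, .inl _ => True
    | .inr _, .inr _ => False
  symm := ⟨by
    rintro (i | a) (j | b) h <;> simp_all
    all_goals exact fun h' => h h'.symm⟩
  loopless := ⟨by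
    rintro (i | a) h <;> simp_all⟩

/-- `u` lies on the path from `r` to `v` in the tree `T`; this is the tree-order. -/
def TreeLE (T : SimpleGraph V) (r u v : V) : Prop :=
  ∀ p : T.Walk r v, p.IsPath → u ∈ p.support

/-- `T` is a normal spanning tree of `G` with root `r`. -/
def IsNormalSpanningTree (G T : SimpleGraph V) (r : V) : Prop :=
  T ≤ G ∧ T.IsTree ∧ ∀ u v, G.Adj u v → TreeLE T r u v ∨ TreeLE T r v u

universe u

/-!
The branch sets `A`, `B` of the two dominating vertices are disjoint, connected and
non-adjacent, so no clique bag meets both of them: the subtrees of the decomposition tree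
formed by the bags meeting `A` and those meeting `B` are disjoint. In a tree, two disjoint
subtrees are separated by a single node `s`, so every subtree meeting both contains `s`.
The branch set of each clique vertex is adjacent to both `A` and `B`, hence its subtree meets
both subtrees and contains `s`. Thus the bag at `s` meets infinitely many disjoint branch sets,
contradicting its finiteness.
-/

namespace SimpleGraph

variable {α : Type*} {T : SimpleGraph α}

lemma Reachable.deleteEdges_of_induce {C : Set α} {e : Sym2 α} {a : α} (ha : a ∈ e)
    (haC : a ∉ C) {x y : C} (h : (T.induce C).Reachable x y) :
    (T.deleteEdges {e}).Reachable x y :=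
  h.map ⟨Subtype.val, fun {v w} hvw => deleteEdges_adj.mpr ⟨hvw, fun he => by
    rw [Set.mem_singleton_iff] at he
    rcases Sym2.mem_iff.mp (he ▸ ha) with rfl | rfl
    exacts [haC v.2, haC w.2]⟩⟩

/-- Two disjoint subtrees `A`, `B` of a tree are separated by a single node. -/
lemma IsTree.exists_mem_of_meets_both (hT : T.IsTree) {A B : Set α} (hAB : Disjoint A B)
    (hA : (T.induce A).Connected) (hB : (T.induce B).Connected) :
    ∃ s, ∀ C : Set α, (T.induce C).Connected → (C ∩ A).Nonempty → (C ∩ B).Nonempty →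
      s ∈ C := by
  obtain ⟨⟨a, ha⟩⟩ := hA.nonempty
  obtain ⟨⟨b, hb⟩⟩ := hB.nonempty
  have hbA : b ∉ A := hAB.notMem_of_mem_right hb
  -- the nodes joined to `b` outside `A`; the last edge of a `b`–`a` path leaving it is `r s`
  let Z : Set α := {v | ∃ hv : v ∉ A, (T.induce Aᶜ).Reachable ⟨v, hv⟩ ⟨b, hbA⟩}
  obtain ⟨⟨⟨r, s⟩, hrs⟩, -, ⟨hrA, hrb⟩, hsZ⟩ :=
    (hT.connected.preconnected b a).some.exists_boundary_dart Z ⟨hbA, .rfl⟩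
      fun ⟨haA, _⟩ => haA ha
  have hsA : s ∈ A := by
    by_contra hsA
    exact hsZ ⟨hsA, (Adj.reachable (G := T.induce Aᶜ) (u := ⟨s, hsA⟩) (v := ⟨r, hrA⟩)
      hrs.symm).trans hrb⟩
  have hbridge : ¬ (T.deleteEdges {s(s, r)}).Reachable s r :=
    isAcyclic_iff_forall_adj_isBridge.mp hT.isAcyclic hrs.symm
  -- if `C` avoids `s`, then `s ⇝ x ⇝ y ⇝ b ⇝ r` avoids the bridge `s r`
  refine ⟨s, fun C hC ⟨x, hxC, hxA⟩ ⟨y, hyC, hyB⟩ => by_contra fun hsC => hbridge ?_⟩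
  have hsx : (T.deleteEdges {s(s, r)}).Reachable s x :=
    (hA.preconnected ⟨s, hsA⟩ ⟨x, hxA⟩).deleteEdges_of_induce (Sym2.mem_mk_right _ _) hrA
  have hxy : (T.deleteEdges {s(s, r)}).Reachable x y :=
    (hC.preconnected ⟨x, hxC⟩ ⟨y, hyC⟩).deleteEdges_of_induce (Sym2.mem_mk_left _ _) hsC
  have hyb : (T.deleteEdges {s(s, r)}).Reachable y b :=
    (hB.preconnected ⟨y, hyB⟩ ⟨b, hb⟩).deleteEdges_of_induce (Sym2.mem_mk_left _ _)
      (hAB.notMem_of_mem_left hsA)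
  have hbr : (T.deleteEdges {s(s, r)}).Reachable b r :=
    hrb.symm.deleteEdges_of_induce (Sym2.mem_mk_left _ _) (not_not.mpr hsA)
  exact hsx.trans (hxy.trans (hyb.trans hbr))

end SimpleGraph

section TreeDecomposition

variable {ι : Type*} {G : SimpleGraph V} {T : SimpleGraph ι} {bag : ι → Set V}

/-- For connected `X`, this is the subtree `T_X` of the decomposition tree. -/
def bagsMeeting (bag : ι → Set V) (X : Set V) : Set ι :=
  {t | (bag t ∩ X).Nonempty}

lemma IsTreeDecomp.induce_bagsMeeting_connected (htd : IsTreeDecomp G T bag) {X : Set V}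
    (hX : (G.induce X).Connected) : (T.induce (bagsMeeting bag X)).Connected := by
  obtain ⟨-, hcover, hedge, hconn⟩ := htd
  have hvertex : ∀ v : X, ∀ t₁ t₂ (h₁ : v.1 ∈ bag t₁) (h₂ : v.1 ∈ bag t₂),
      (T.induce (bagsMeeting bag X)).Reachable ⟨t₁, v, h₁, v.2⟩ ⟨t₂, v, h₂, v.2⟩ :=
    fun v t₁ t₂ h₁ h₂ => ((hconn v).preconnected ⟨t₁, h₁⟩ ⟨t₂, h₂⟩).map
      (T.induceHomOfLE (s' := bagsMeeting bag X) fun _ ht => ⟨v, ht, v.2⟩).toHom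
  have hwalk : ∀ (v w : X), (G.induce X).Walk v w → ∀ t₁ t₂ (h₁ : v.1 ∈ bag t₁)
      (h₂ : w.1 ∈ bag t₂),
      (T.induce (bagsMeeting bag X)).Reachable ⟨t₁, v, h₁, v.2⟩ ⟨t₂, w, h₂, w.2⟩ := by
    intro v w p
    induction p with
    | nil => exact hvertex _
    | cons hadj _ ih =>
      intro t₁ t₂ h₁ h₂
      obtain ⟨t, hvt, hwt⟩ := hedge _ _ hadj
      exact (hvertex _ t₁ t h₁ hvt).trans (ih t t₂ hwt h₂)
  obtain ⟨⟨v, hv⟩⟩ := hX.nonempty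
  obtain ⟨t, ht⟩ := hcover v
  refine connected_iff _ |>.mpr ⟨?_, ⟨⟨t, v, ht, hv⟩⟩⟩
  rintro ⟨t₁, v₁, h₁, hv₁⟩ ⟨t₂, v₂, h₂, hv₂⟩
  exact hwalk ⟨v₁, hv₁⟩ ⟨v₂, hv₂⟩ (hX.preconnected _ _).some t₁ t₂ h₁ h₂

lemma IsTreeDecomp.bagsMeeting_inter_nonempty_of_adj (htd : IsTreeDecomp G T bag)
    {X Y : Set V} {x y : V} (hx : x ∈ X) (hy : y ∈ Y) (hxy : G.Adj x y) :
    (bagsMeeting bag X ∩ bagsMeeting bag Y).Nonempty :=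
  let ⟨t, hxt, hyt⟩ := htd.2.2.1 x y hxy
  ⟨t, ⟨x, hxt, hx⟩, ⟨y, hyt, hy⟩⟩

lemma disjoint_bagsMeeting_of_isClique (hclique : ∀ t, G.IsClique (bag t)) {X Y : Set V}
    (hXY : Disjoint X Y) (hnadj : ∀ x ∈ X, ∀ y ∈ Y, ¬ G.Adj x y) :
    Disjoint (bagsMeeting bag X) (bagsMeeting bag Y) :=
  Set.disjoint_left.mpr fun _ ⟨x, hxt, hx⟩ ⟨y, hyt, hy⟩ =>
    hnadj x hx y hy (hclique _ hxt hyt (hXY.ne_of_mem hx hy))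

lemma IsTreeDecomp.exists_bag_meets_of_adj_both (htd : IsTreeDecomp G T bag)
    (hclique : ∀ t, G.IsClique (bag t)) {A B : Set V} (hA : (G.induce A).Connected)
    (hB : (G.induce B).Connected) (hAB : Disjoint A B)
    (hnadj : ∀ a ∈ A, ∀ b ∈ B, ¬ G.Adj a b) :
    ∃ t, ∀ X : Set V, (G.induce X).Connected → (∃ x ∈ X, ∃ a ∈ A, G.Adj x a) →
      (∃ x ∈ X, ∃ b ∈ B, G.Adj x b) → (bag t ∩ X).Nonempty := by
  obtain ⟨t, ht⟩ := htd.1.exists_mem_of_meets_both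
    (disjoint_bagsMeeting_of_isClique hclique hAB hnadj)
    (htd.induce_bagsMeeting_connected hA) (htd.induce_bagsMeeting_connected hB)
  exact ⟨t, fun X hX ⟨x, hx, a, ha, hxa⟩ ⟨y, hy, b, hb, hyb⟩ =>
    ht _ (htd.induce_bagsMeeting_connected hX)
      (htd.bagsMeeting_inter_nonempty_of_adj hx ha hxa)
      (htd.bagsMeeting_inter_nonempty_of_adj hy hb hyb)⟩

end TreeDecomposition

theorem stmt12 {V : Type u} {ι : Type*} (G : SimpleGraph V) (T : SimpleGraph ι)
    (bag : ι → Set V) (htd : IsTreeDecomp G T bag)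
    (hfin : ∀ t, (bag t).Finite ∧ G.IsClique (bag t)) :
    ¬ IsInducedMinor HGraph G := by
  rintro ⟨B, -, hconn, hdisj, hadj⟩
  have hnadj : ∀ a ∈ B (.inr true), ∀ b ∈ B (.inr false), ¬ G.Adj a b :=
    fun a ha b hb h => (hadj _ _ (by simp)).mp ⟨a, ha, b, hb, h⟩
  obtain ⟨t, ht⟩ := htd.exists_bag_meets_of_adj_both (fun t => (hfin t).2) (hconn _) (hconn _)
    (hdisj (by simp)) hnadj
  have hmeet : ∀ i : ℕ, (bag t ∩ B (.inl i)).Nonempty := fun i =>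
    ht _ (hconn _) ((hadj _ _ (by simp)).mpr trivial) ((hadj _ _ (by simp)).mpr trivial)
  choose f hf using hmeet
  have hf_inj : f.Injective := fun i j hij => by_contra fun hne =>
    (hdisj (Sum.inl_injective.ne hne)).ne_of_mem (hf i).2 (hf j).2 hij
  exact (hfin t).1.not_infinite (Set.infinite_of_injective_forall_mem hf_inj fun i => (hf i).1)
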